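/- Let k be a field of characteristic p > 2 and B = k⟨a,b⟩/⟨a^p, b^p, ba - ab - (1/2)a²⟩. Then a^{p-1} ≠ 0 and b^{p-1} ≠ 0 in B, i.e., the nilpotency indices of a and b are exactly p. -/
import Mathlib


noncomputable section

variable (k : Type*) [Field k]

def aF : FreeAlgebra k (Fin 2) := FreeAlgebra.ι k 0

def bF : FreeAlgebra k (Fin 2) := FreeAlgebra.ι k 1

/-- The relations `a^p = 0`, `b^p = 0`, `ba - ab - (1/2)a² = 0`. -/
def relB (p : ℕ) : FreeAlgebra k (Fin 2) → FreeAlgebra k (Fin 2) → Prop :=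
  fun x y => y = 0 ∧
    (x = (aF k) ^ p ∨ x = (bF k) ^ p ∨
      x = bF k * aF k - aF k * bF k - ((2 : k)⁻¹) • (aF k) ^ 2)

/-- The algebra `B = k⟨a,b⟩/⟨a^p, b^p, ba - ab - (1/2)a²⟩`. -/
abbrev B (p : ℕ) := RingQuot (relB k p)

def aB (p : ℕ) : B k p := RingQuot.mkAlgHom k (relB k p) (aF k)

def bB (p : ℕ) : B k p := RingQuot.mkAlgHom k (relB k p) (bF k)


namespace NilpAux
open Polynomial AdjoinRoot

variable {k : Type*} [Field k] {p : ℕ}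

abbrev Q (k : Type*) [Field k] (p : ℕ) := AdjoinRoot ((X : k[X]) ^ p)

lemma Xp_ne_zero : ((X : k[X]) ^ p) ≠ 0 := pow_ne_zero _ X_ne_zero

def r (k : Type*) [Field k] (p : ℕ) : Q k p := root ((X : k[X]) ^ p)

lemma r_pow_self : (r k p) ^ p = 0 := by
  rw [r, ← AdjoinRoot.mk_X, ← map_pow, AdjoinRoot.mk_self]

lemma r_pow_ge {m : ℕ} (hm : p ≤ m) : (r k p) ^ m = 0 := by
  rw [← Nat.sub_add_cancel hm, pow_add, r_pow_self, mul_zero]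

def pb (k : Type*) [Field k] (p : ℕ) : PowerBasis k (Q k p) :=
  AdjoinRoot.powerBasis Xp_ne_zero

lemma pb_dim : (pb k p).dim = p := by
  show (AdjoinRoot.powerBasis Xp_ne_zero).dim = p
  rw [AdjoinRoot.powerBasis_dim, natDegree_X_pow]

lemma pb_basis (i : Fin (pb k p).dim) : (pb k p).basis i = (r k p) ^ (i : ℕ) := by
  rw [PowerBasis.coe_basis]
  show (AdjoinRoot.powerBasis Xp_ne_zero).gen ^ (i:ℕ) = _
  rw [AdjoinRoot.powerBasis_gen]
  rfl

def β (k : Type*) [Field k] (p : ℕ) : Module.End k (Q k p) :=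
  (pb k p).basis.constr k fun i => (((i : ℕ) : k) / 2) • (r k p) ^ ((i : ℕ) + 1)

lemma β_apply_lt {m : ℕ} (hm : m < p) :
    β k p ((r k p) ^ m) = ((m : k) / 2) • (r k p) ^ (m + 1) := by
  have hm' : m < (pb k p).dim := by rw [pb_dim]; exact hm
  have : (r k p) ^ m = (pb k p).basis ⟨m, hm'⟩ := (pb_basis ⟨m, hm'⟩).symm
  rw [this, β, Module.Basis.constr_basis]

lemma β_apply (m : ℕ) : ∃ c : k, β k p ((r k p) ^ m) = c • (r k p) ^ (m + 1) := by
  rcases lt_or_ge m p with h | h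
  · exact ⟨_, β_apply_lt h⟩
  · exact ⟨0, by rw [r_pow_ge h, map_zero, zero_smul]⟩

lemma β_pow_apply (n m : ℕ) : ∃ c : k, (β k p ^ n) ((r k p) ^ m) = c • (r k p) ^ (m + n) := by
  induction n with
  | zero => exact ⟨1, by simp⟩
  | succ n ih =>
    obtain ⟨c, hc⟩ := ih
    obtain ⟨c', hc'⟩ := β_apply (k := k) (p := p) (m + n)
    refine ⟨c * c', ?_⟩
    rw [pow_succ', Module.End.mul_apply, hc, map_smul, hc', smul_smul, ← add_assoc]

lemma β_pow_p : (β k p) ^ p = 0 := by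
  apply (pb k p).basis.ext
  intro i
  rw [pb_basis]
  obtain ⟨c, hc⟩ := β_pow_apply (k := k) (p := p) p (i : ℕ)
  rw [hc, r_pow_ge (by omega), smul_zero, LinearMap.zero_apply]

def α (k : Type*) [Field k] (p : ℕ) : Module.End k (Q k p) :=
  LinearMap.mulLeft k (r k p)

lemma α_pow (n : ℕ) : (α k p) ^ n = LinearMap.mulLeft k ((r k p) ^ n) := by
  unfold α; exact LinearMap.pow_mulLeft (R := k) (A := Q k p) (r k p) n

lemma α_pow_p : (α k p) ^ p = 0 := by
  ext x
  rw [α_pow, LinearMap.mulLeft_apply, r_pow_self, zero_mul, LinearMap.zero_apply]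

lemma relation3 :
    β k p * α k p - α k p * β k p - (2 : k)⁻¹ • (α k p) ^ 2 = 0 := by
  apply (pb k p).basis.ext
  intro i
  rw [pb_basis]
  have hi : (i : ℕ) < p := lt_of_lt_of_le i.2 pb_dim.le
  simp only [LinearMap.sub_apply, Module.End.mul_apply, LinearMap.smul_apply,
    LinearMap.zero_apply]
  have hα : ∀ (x : Q k p), α k p x = r k p * x := fun x => rfl
  have h2 : ((α k p) ^ 2) ((r k p) ^ (i : ℕ)) = (r k p) ^ ((i : ℕ) + 2) := by
    rw [α_pow, LinearMap.mulLeft_apply, ← pow_add]; ring_nf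
  rcases eq_or_lt_of_le (show (i:ℕ) + 1 ≤ p from hi) with h | h
  · -- i + 1 = p
    have e1 : r k p ^ ((i:ℕ)+1) = 0 := r_pow_ge h.ge
    have e2 : r k p ^ ((i:ℕ)+2) = 0 := r_pow_ge (by omega)
    rw [hα, ← pow_succ', e1, map_zero, β_apply_lt hi, e1, smul_zero, map_zero, h2, e2]
    simp
  · -- i + 1 < p
    rw [hα, ← pow_succ', β_apply_lt h, β_apply_lt hi, map_smul, hα, ← pow_succ', h2]
    rw [show (i:ℕ) + 1 + 1 = (i:ℕ) + 2 from rfl]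
    rw [← sub_smul, ← sub_smul]
    convert zero_smul k _
    push_cast
    field_simp
    ring

lemma r_pow_pred_ne_zero (hp : 0 < p) : (r k p) ^ (p - 1) ≠ 0 := by
  have hm' : p - 1 < (pb k p).dim := by rw [pb_dim]; omega
  have : (r k p) ^ (p - 1) = (pb k p).basis ⟨p - 1, hm'⟩ := (pb_basis ⟨p - 1, hm'⟩).symm
  rw [this]
  exact (pb k p).basis.ne_zero _


variable (k) in
lemma hrelA : ∀ ⦃x y⦄, relB k p x y →
    (FreeAlgebra.lift k ![α k p, β k p]) x = (FreeAlgebra.lift k ![α k p, β k p]) y := by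
  rintro x y ⟨rfl, h | h | h⟩ <;> subst h <;>
    simp only [map_pow, map_sub, map_mul, map_smul, map_zero, FreeAlgebra.lift_ι_apply,
      aF, bF, Matrix.cons_val_zero, Matrix.cons_val_one, Matrix.head_cons]
  · exact α_pow_p
  · exact β_pow_p
  · exact relation3

def φa (k : Type*) [Field k] (p : ℕ) : B k p →ₐ[k] Module.End k (Q k p) :=
  RingQuot.liftAlgHom k ⟨FreeAlgebra.lift k ![α k p, β k p], hrelA k⟩

lemma φa_aB : φa k p (aB k p) = α k p := by
  rw [aB, φa, RingQuot.liftAlgHom_mkAlgHom_apply, aF, FreeAlgebra.lift_ι_apply]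
  rfl

variable (k) in
lemma hrelb (hp : p ≠ 0) : ∀ ⦃x y⦄, relB k p x y →
    (FreeAlgebra.lift k ![(0 : Q k p), r k p]) x =
      (FreeAlgebra.lift k ![(0 : Q k p), r k p]) y := by
  rintro x y ⟨rfl, h | h | h⟩ <;> subst h <;>
    simp only [map_pow, map_sub, map_mul, map_smul, map_zero, FreeAlgebra.lift_ι_apply,
      aF, bF, Matrix.cons_val_zero, Matrix.cons_val_one, Matrix.head_cons]
  · exact zero_pow hp
  · exact r_pow_self
  · simp

def φb (k : Type*) [Field k] (p : ℕ) (hp : p ≠ 0) : B k p →ₐ[k] Q k p :=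
  RingQuot.liftAlgHom k ⟨FreeAlgebra.lift k ![(0 : Q k p), r k p], hrelb k hp⟩

lemma φb_bB (hp : p ≠ 0) : φb k p hp (bB k p) = r k p := by
  rw [bB, φb, RingQuot.liftAlgHom_mkAlgHom_apply, bF, FreeAlgebra.lift_ι_apply]
  rfl

end NilpAux

theorem nilpotency_index_eq_p (p : ℕ) [Fact p.Prime] (hp : 2 < p) [CharP k p] :
    (aB k p) ^ (p - 1) ≠ 0 ∧ (bB k p) ^ (p - 1) ≠ 0 := by
  open NilpAux in
  have hp0 : p ≠ 0 := by omega
  have hpos : 0 < p := by omega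
  constructor
  · intro h
    have h1 : (φa k p) (aB k p) ^ (p - 1) = 0 := by
      rw [← map_pow, h, map_zero]
    rw [φa_aB, α_pow] at h1
    apply r_pow_pred_ne_zero (k := k) hpos
    have := congrArg (fun f => f (1 : Q k p)) h1
    simpa using this
  · intro h
    have h1 : (φb k p hp0) (bB k p) ^ (p - 1) = 0 := by
      rw [← map_pow, h, map_zero]
    rw [φb_bB] at h1
    exact r_pow_pred_ne_zero (k := k) hpos h1
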